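/- Unitarity of the nonabelian Fourier matrix for projective irreps: let G be a finite group, ω a normalized unitary 2-cocycle on G, and (D^α)_{α ∈ A} a family of pairwise inequivalent irreducible unitary ω-projective representations of G with dimensions d_α satisfying ∑_{α ∈ A} d_α² = |G|. Let U be the matrix whose rows are indexed by triples θ = (α, i, j) with α ∈ A and i, j ∈ Fin d_α, whose columns are indexed by g ∈ G, and whose entries are U_{θ, g} = √(d_α/|G|) · (D^α g)_{i j}. Then U is unitary: U * Uᴴ = 1 and Uᴴ * U = 1. -/

import Mathlib

/-!
Averaging `X ↦ ∑ g, D^α g * X * (D^β g)ᴴ` produces an intertwiner, since the cocycle factors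
`ω` and `conj ω` cancel. Schur's lemma then gives the orthogonality relations
`∑ g, D^α g i j * conj (D^β g k l) = δ_{αβ} δ_{ik} δ_{jl} |G| / d_α`, i.e. the rows of `U` are
orthonormal: `U * Uᴴ = 1`. The dimension count `∑ d_α² = |G|` makes `U` square, so `Uᴴ` is also
a left inverse.
-/

open Matrix Kronecker BigOperators

noncomputable section

/-- A unitary `ω`-projective representation of `G` of dimension `d`. -/
def IsUnitaryProjRep {G : Type} [Group G] (ω : G → G → ℂ) {d : ℕ}
    (D : G → Matrix (Fin d) (Fin d) ℂ) : Prop :=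
  (∀ g, D g ∈ Matrix.unitaryGroup (Fin d) ℂ) ∧
    ∀ g h, D g * D h = ω g h • D (g * h)

/-- Irreducibility: the only invariant subspaces of `ℂ^d` are `⊥` and `⊤`. -/
def IsIrred {G : Type} [Group G] {d : ℕ}
    (D : G → Matrix (Fin d) (Fin d) ℂ) : Prop :=
  ∀ p : Submodule ℂ (Fin d → ℂ),
    (∀ g : G, ∀ v ∈ p, (D g).mulVec v ∈ p) → p = ⊥ ∨ p = ⊤

/-- Equivalence of projective representations (of possibly different stated dimensions). -/
def ProjEquiv {G : Type} [Group G] {d₁ d₂ : ℕ}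
    (D₁ : G → Matrix (Fin d₁) (Fin d₁) ℂ)
    (D₂ : G → Matrix (Fin d₂) (Fin d₂) ℂ) : Prop :=
  ∃ h : d₁ = d₂, ∃ S : Matrix (Fin d₂) (Fin d₂) ℂ, IsUnit S.det ∧
    ∀ g, D₂ g = S⁻¹ * (Matrix.reindex (finCongr h) (finCongr h) (D₁ g)) * S

/-- A normalized unitary 2-cocycle on `G`. -/
def IsCocycle {G : Type} [Group G] (ω : G → G → ℂ) : Prop :=
  (∀ g h, ‖ω g h‖ = 1) ∧ (∀ g, ω 1 g = 1) ∧ (∀ g, ω g 1 = 1) ∧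
    ∀ g h k, ω g h * ω (g * h) k = ω g (h * k) * ω h k

/-- The regular representation matrix of `g`. -/
def regRep (G : Type) [Group G] [DecidableEq G] (g : G) : Matrix G G ℂ :=
  fun h h' => if h = g * h' then 1 else 0

/-- The `ω`-projective regular representation matrix of `g`. -/
def projRegRep {G : Type} [Group G] [DecidableEq G] (ω : G → G → ℂ) (g : G) :
    Matrix G G ℂ :=
  fun h h' => if h = g * h' then ω g h' else 0

section Schur

variable {G : Type} [Group G] {d₁ d₂ : ℕ}
  {D₁ : G → Matrix (Fin d₁) (Fin d₁) ℂ} {D₂ : G → Matrix (Fin d₂) (Fin d₂) ℂ}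
  {T : Matrix (Fin d₁) (Fin d₂) ℂ}

theorem eq_zero_or_bijective_of_intertwines (h₁ : IsIrred D₁) (h₂ : IsIrred D₂)
    (hT : ∀ g, D₁ g * T = T * D₂ g) : T = 0 ∨ Function.Bijective (toLin' T) := by
  have hker : LinearMap.ker (toLin' T) = ⊥ ∨ LinearMap.ker (toLin' T) = ⊤ := by
    refine h₂ _ fun g v hv ↦ ?_
    simp only [LinearMap.mem_ker, toLin'_apply] at hv ⊢
    rw [mulVec_mulVec, ← hT, ← mulVec_mulVec, hv, mulVec_zero]
  have hrange : LinearMap.range (toLin' T) = ⊥ ∨ LinearMap.range (toLin' T) = ⊤ := by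
    refine h₁ _ ?_
    rintro g _ ⟨w, rfl⟩
    exact ⟨D₂ g *ᵥ w, by simp only [toLin'_apply, mulVec_mulVec, hT]⟩
  by_cases h0 : T = 0
  · exact .inl h0
  have hT0 : toLin' T ≠ 0 := by simpa using h0
  exact .inr ⟨LinearMap.ker_eq_bot.mp (hker.resolve_right (mt LinearMap.ker_eq_top.mp hT0)),
    LinearMap.range_eq_top.mp (hrange.resolve_left (mt LinearMap.range_eq_bot.mp hT0))⟩

theorem projEquiv_of_intertwines_of_bijective (hT : ∀ g, D₁ g * T = T * D₂ g)
    (hbij : Function.Bijective (toLin' T)) : ProjEquiv D₁ D₂ := by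
  obtain rfl : d₁ = d₂ := by
    simpa using (LinearEquiv.ofBijective (toLin' T) hbij).finrank_eq.symm
  have hdet : IsUnit T.det := by
    rw [← isUnit_iff_isUnit_det, ← isUnit_toLin'_iff, Module.End.isUnit_iff]
    exact hbij
  refine ⟨rfl, T, hdet, fun g ↦ ?_⟩
  rw [finCongr_refl, reindex_refl_refl, Matrix.mul_assoc, hT, ← Matrix.mul_assoc,
    nonsing_inv_mul T hdet, Matrix.one_mul]

theorem eq_zero_of_intertwines_of_not_projEquiv (h₁ : IsIrred D₁) (h₂ : IsIrred D₂)
    (hne : ¬ ProjEquiv D₁ D₂) (hT : ∀ g, D₁ g * T = T * D₂ g) : T = 0 :=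
  (eq_zero_or_bijective_of_intertwines h₁ h₂ hT).resolve_right
    fun hbij ↦ hne (projEquiv_of_intertwines_of_bijective hT hbij)

-- `ℂ` is algebraically closed, so `T` has an eigenvalue `μ`; then `T - μ • 1` is a singular
-- intertwiner.
theorem exists_eq_smul_one_of_intertwines {d : ℕ} {D : G → Matrix (Fin d) (Fin d) ℂ}
    (hirr : IsIrred D) {T : Matrix (Fin d) (Fin d) ℂ} (hT : ∀ g, D g * T = T * D g) :
    ∃ c : ℂ, T = c • 1 := by
  rcases Nat.eq_zero_or_pos d with rfl | hd
  · exact ⟨0, Subsingleton.elim _ _⟩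
  have : Nonempty (Fin d) := ⟨⟨0, hd⟩⟩
  obtain ⟨μ, hμ⟩ := Module.End.exists_eigenvalue (toLin' T)
  obtain ⟨v, hv⟩ := hμ.exists_hasEigenvector
  refine ⟨μ, sub_eq_zero.mp ?_⟩
  refine (eq_zero_or_bijective_of_intertwines hirr hirr fun g ↦ ?_).resolve_right fun hbij ↦ ?_
  · simp only [Matrix.mul_sub, Matrix.sub_mul, hT, Matrix.mul_smul, Matrix.smul_mul,
      Matrix.mul_one, Matrix.one_mul]
  · have hv0 : toLin' (T - μ • 1) v = 0 := by
      simpa [sub_mulVec, smul_mulVec, sub_eq_zero] using hv.apply_eq_smul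
    exact hv.2 (hbij.1 (hv0.trans (map_zero _).symm))

end Schur

theorem IsUnitaryProjRep.conjTranspose_mul_self {G : Type} [Group G] {ω : G → G → ℂ}
    {d : ℕ} {D : G → Matrix (Fin d) (Fin d) ℂ} (hD : IsUnitaryProjRep ω D) (g : G) :
    (D g)ᴴ * D g = 1 :=
  (mem_unitaryGroup_iff').mp (hD.1 g)

def twirl {G : Type} [Fintype G] {d₁ d₂ : ℕ} (D₁ : G → Matrix (Fin d₁) (Fin d₁) ℂ)
    (D₂ : G → Matrix (Fin d₂) (Fin d₂) ℂ) (X : Matrix (Fin d₁) (Fin d₂) ℂ) :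
    Matrix (Fin d₁) (Fin d₂) ℂ :=
  ∑ g, D₁ g * X * (D₂ g)ᴴ

theorem twirl_single_apply {G : Type} [Fintype G] {d₁ d₂ : ℕ}
    (D₁ : G → Matrix (Fin d₁) (Fin d₁) ℂ) (D₂ : G → Matrix (Fin d₂) (Fin d₂) ℂ)
    (i j : Fin d₁) (k l : Fin d₂) :
    twirl D₁ D₂ (single j l 1) i k = ∑ g, D₁ g i j * star (D₂ g k l) := by
  simp [twirl, Matrix.sum_apply, mul_apply, single, ite_and]

section Orthogonality

variable {G : Type} [Group G] [Fintype G] {ω : G → G → ℂ} {d₁ d₂ : ℕ}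
  {D₁ : G → Matrix (Fin d₁) (Fin d₁) ℂ} {D₂ : G → Matrix (Fin d₂) (Fin d₂) ℂ}

theorem twirl_intertwines (hω : ∀ g h, ‖ω g h‖ = 1) (h₁ : IsUnitaryProjRep ω D₁)
    (h₂ : IsUnitaryProjRep ω D₂) (X : Matrix (Fin d₁) (Fin d₂) ℂ) (h : G) :
    D₁ h * twirl D₁ D₂ X = twirl D₁ D₂ X * D₂ h := by
  have hconj : ∀ g, ω h g * star (ω h g) = 1 := fun g ↦ by
    rw [Complex.star_def, Complex.mul_conj, ← Complex.sq_norm, hω]; norm_num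
  have hconjugate : D₁ h * twirl D₁ D₂ X * (D₂ h)ᴴ = twirl D₁ D₂ X := by
    rw [twirl, Matrix.mul_sum, Matrix.sum_mul,
      ← Equiv.sum_comp (Equiv.mulLeft h) fun g ↦ D₁ g * X * (D₂ g)ᴴ]
    refine Finset.sum_congr rfl fun g _ ↦ ?_
    rw [Equiv.coe_mulLeft]
    calc D₁ h * (D₁ g * X * (D₂ g)ᴴ) * (D₂ h)ᴴ
        = (D₁ h * D₁ g) * X * (D₂ h * D₂ g)ᴴ := by
          simp only [conjTranspose_mul, Matrix.mul_assoc]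
      _ = D₁ (h * g) * X * (D₂ (h * g))ᴴ := by
          rw [h₁.2, h₂.2, conjTranspose_smul, Matrix.smul_mul, Matrix.smul_mul, Matrix.mul_smul,
            smul_smul, hconj, one_smul]
  calc D₁ h * twirl D₁ D₂ X = D₁ h * twirl D₁ D₂ X * ((D₂ h)ᴴ * D₂ h) := by
        rw [h₂.conjTranspose_mul_self, Matrix.mul_one]
    _ = twirl D₁ D₂ X * D₂ h := by rw [← Matrix.mul_assoc, hconjugate]

theorem trace_twirl {d : ℕ} {D : G → Matrix (Fin d) (Fin d) ℂ} (hD : IsUnitaryProjRep ω D)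
    (X : Matrix (Fin d) (Fin d) ℂ) : (twirl D D X).trace = Fintype.card G * X.trace := by
  simp [twirl, trace_sum, trace_mul_cycle, hD.conjTranspose_mul_self]

theorem sum_mul_star_eq_zero_of_not_projEquiv (hω : ∀ g h, ‖ω g h‖ = 1)
    (h₁ : IsUnitaryProjRep ω D₁) (h₂ : IsUnitaryProjRep ω D₂) (hi₁ : IsIrred D₁)
    (hi₂ : IsIrred D₂) (hne : ¬ ProjEquiv D₁ D₂) (i j : Fin d₁) (k l : Fin d₂) :
    ∑ g, D₁ g i j * star (D₂ g k l) = 0 := by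
  rw [← twirl_single_apply, eq_zero_of_intertwines_of_not_projEquiv hi₁ hi₂ hne
    (twirl_intertwines hω h₁ h₂ _), Matrix.zero_apply]

theorem sum_mul_star_self {d : ℕ} {D : G → Matrix (Fin d) (Fin d) ℂ}
    (hω : ∀ g h, ‖ω g h‖ = 1) (hD : IsUnitaryProjRep ω D) (hirr : IsIrred D)
    (i j k l : Fin d) :
    ∑ g, D g i j * star (D g k l) =
      if i = k ∧ j = l then (Fintype.card G : ℂ) / d else 0 := by
  obtain ⟨c, hc⟩ :=
    exists_eq_smul_one_of_intertwines hirr (twirl_intertwines hω hD hD (single j l 1))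
  have hd : (d : ℂ) ≠ 0 := Nat.cast_ne_zero.mpr j.pos.ne'
  have htrace : c * d = Fintype.card G * (if j = l then 1 else 0) := by
    have := trace_twirl hD (single j l 1)
    rw [hc] at this
    by_cases hjl : j = l
    · simpa [hjl, trace_single_eq_same] using this
    · simpa [hjl, trace_single_eq_of_ne _ _ _ hjl] using this
  rw [← twirl_single_apply, hc, eq_div_of_mul_eq hd htrace, Matrix.smul_apply, one_apply]
  by_cases hik : i = k <;> by_cases hjl : j = l <;> simp [hik, hjl]

end Orthogonality

theorem sqrt_div_mul_sqrt_div_mul_div {d n : ℕ} (hd : d ≠ 0) (hn : n ≠ 0) :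
    (Real.sqrt (d / n) : ℂ) * Real.sqrt (d / n) * (n / d) = 1 := by
  rw [← Complex.ofReal_mul, Real.mul_self_sqrt (by positivity)]
  push_cast
  field_simp

theorem fourier_mul_conjTranspose_eq_one {G : Type} [Group G] [Fintype G] {ω : G → G → ℂ}
    (hω : ∀ g h, ‖ω g h‖ = 1) {A : Type} [DecidableEq A] {d : A → ℕ}
    {D : ∀ α : A, G → Matrix (Fin (d α)) (Fin (d α)) ℂ}
    (hrep : ∀ α, IsUnitaryProjRep ω (D α))
    (hirr : ∀ α, IsIrred (D α)) (hinequiv : ∀ α β, α ≠ β → ¬ ProjEquiv (D α) (D β))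
    {U : Matrix (Σ α : A, Fin (d α) × Fin (d α)) G ℂ}
    (hU : ∀ α i j g,
      U ⟨α, (i, j)⟩ g = (Real.sqrt (d α / Fintype.card G) : ℂ) * D α g i j) :
    U * Uᴴ = 1 := by
  ext ⟨α, i, j⟩ ⟨β, k, l⟩
  have hentry : (U * Uᴴ) ⟨α, (i, j)⟩ ⟨β, (k, l)⟩ =
      (Real.sqrt (d α / Fintype.card G) : ℂ) * Real.sqrt (d β / Fintype.card G) *
        ∑ g, D α g i j * star (D β g k l) := by
    simp only [mul_apply, conjTranspose_apply, hU, star_mul', Complex.star_def,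
      Complex.conj_ofReal, Finset.mul_sum]
    exact Finset.sum_congr rfl fun g _ ↦ by ring
  rw [hentry, one_apply]
  by_cases hαβ : α = β
  · subst hαβ
    rw [sum_mul_star_self hω (hrep α) (hirr α)]
    by_cases hijkl : i = k ∧ j = l
    · obtain ⟨rfl, rfl⟩ := hijkl
      simp only [and_self, if_true]
      exact sqrt_div_mul_sqrt_div_mul_div i.pos.ne' Fintype.card_ne_zero
    · simp [hijkl]
  · rw [sum_mul_star_eq_zero_of_not_projEquiv hω (hrep α) (hrep β) (hirr α) (hirr β)
      (hinequiv α β hαβ), mul_zero, if_neg fun h ↦ hαβ (congrArg Sigma.fst h)]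

/-- unitarity of the nonabelian Fourier matrix for projective irreps. -/
theorem fourier_matrix_unitary
    {G : Type} [Group G] [Fintype G] [DecidableEq G]
    (ω : G → G → ℂ) (hω : IsCocycle ω)
    {A : Type} [Fintype A] [DecidableEq A]
    (dfam : A → ℕ)
    (Dfam : ∀ α : A, G → Matrix (Fin (dfam α)) (Fin (dfam α)) ℂ)
    (hrep : ∀ α, IsUnitaryProjRep ω (Dfam α))
    (hirr : ∀ α, IsIrred (Dfam α))
    (hinequiv : ∀ α β, α ≠ β → ¬ ProjEquiv (Dfam α) (Dfam β))
    (hdim : ∑ α : A, (dfam α) ^ 2 = Fintype.card G)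
    (U : Matrix (Σ α : A, Fin (dfam α) × Fin (dfam α)) G ℂ)
    (hU : ∀ (α : A) (i j : Fin (dfam α)) (g : G),
      U ⟨α, (i, j)⟩ g
        = (Real.sqrt ((dfam α : ℝ) / (Fintype.card G : ℝ)) : ℂ) * Dfam α g i j) :
    U * Uᴴ = 1 ∧ Uᴴ * U = 1 := by
  have hrows : U * Uᴴ = 1 := fourier_mul_conjTranspose_eq_one hω.1 hrep hirr hinequiv hU
  have hsquare : Fintype.card (Σ α : A, Fin (dfam α) × Fin (dfam α)) = Fintype.card G := by
    simp [← hdim, sq]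
  exact ⟨hrows, (mul_eq_one_comm_of_card_eq _ _ _ hsquare).mp hrows⟩
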